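/- For k ≥ 1: A_{k+1,1}^0 = 2 A_{k,0}^0 − A_{k,0}^1 + A_{k,1}^0 + A_{k,1}^1, and for every r ≥ 1, A_{k+1,1}^r = A_{k,0}^r − A_{k,0}^{r+1} + A_{k,1}^{r-1} + 2 A_{k,1}^r + A_{k,1}^{r+1}. -/
import Mathlib


/-- Binomial coefficient `C(n,r)` for integer arguments: zero if `r < 0` or
`0 ≤ n < r`, the usual binomial for `0 ≤ r ≤ n`, and the generalized binomial
for negative upper index. -/
def C (n r : ℤ) : ℤ :=
  if r < 0 then 0
  else if 0 ≤ n then (n.toNat.choose r.toNat : ℤ)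
  else (-1) ^ r.toNat * ((r - n - 1).toNat.choose r.toNat : ℤ)

def A (k l r : ℤ) : ℤ :=
  C (l + r - 1) (r - 1) * C (2 * k - l - 1) (k - l - r - 1) + C (l + r) r * C (2 * k - l - 1) (k - l - r)

lemma C_neg {n r : ℤ} (h : r < 0) : C n r = 0 := by simp [C, h]

lemma C_nn {n r : ℤ} (hn : 0 ≤ n) (hr : 0 ≤ r) : C n r = n.toNat.choose r.toNat := by
  simp [C, not_lt.2 hr, hn]

lemma C_pascal (n r : ℤ) (hn : 0 ≤ n) : C (n+1) r = C n (r-1) + C n r := by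
  rcases lt_or_ge r 0 with h | h
  · rw [C_neg h, C_neg h, C_neg (by linarith)]; ring
  rcases eq_or_lt_of_le h with rfl | h1
  · rw [C_nn (by linarith) le_rfl, C_nn hn le_rfl, C_neg (by norm_num)]
    simp
  · rw [C_nn (by linarith) h, C_nn hn (by linarith), C_nn hn h]
    have e1 : (n+1).toNat = n.toNat + 1 := by omega
    have e2 : r.toNat = (r-1).toNat + 1 := by omega
    rw [e1, e2, Nat.choose_succ_succ]
    push_cast; ring

lemma C_self {r : ℤ} (h : 0 ≤ r) : C r r = 1 := by
  rw [C_nn h h, Nat.choose_self]; norm_num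

lemma C_pred {r : ℤ} (h : 0 ≤ r) : C r (r-1) = r := by
  rcases eq_or_lt_of_le h with rfl | h1
  · rw [C_neg (by norm_num)]
  · rw [C_nn (by linarith) (by omega)]
    have : (r-1).toNat = r.toNat - 1 := by omega
    have e : r.toNat.choose (r.toNat - 1) = r.toNat := by
      rw [← Nat.choose_symm (by omega : r.toNat - 1 ≤ r.toNat)]
      have : r.toNat - (r.toNat - 1) = 1 := by omega
      rw [this, Nat.choose_one_right]
    rw [this, e]; omega

lemma C_symm (n r : ℤ) (hn : 0 ≤ n) : C n r = C n (n - r) := by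
  rcases lt_or_ge r 0 with h | h
  · rw [C_neg h, C_nn hn (by linarith), Nat.choose_eq_zero_of_lt (by omega)]; norm_num
  rcases lt_or_ge n r with h2 | h2
  · rw [C_neg (show n - r < 0 by omega), C_nn hn h, Nat.choose_eq_zero_of_lt (by omega)]; norm_num
  · rw [C_nn hn h, C_nn hn (by omega)]
    have : (n - r).toNat = n.toNat - r.toNat := by omega
    rw [this, Nat.choose_symm (by omega)]

lemma keyr (n r j : ℤ) (hn : 0 ≤ n) (hr : 1 ≤ r) :
    C r (r-1) * C (n+2) (j-1) + C (r+1) r * C (n+2) j =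
    (C (r-1) (r-1) * C (n+1) (j-1) + C r r * C (n+1) j)
    - (C r r * C (n+1) (j-2) + C (r+1) (r+1) * C (n+1) (j-1))
    + (C (r-1) (r-2) * C n (j-1) + C r (r-1) * C n j)
    + 2*(C r (r-1) * C n (j-2) + C (r+1) r * C n (j-1))
    + (C (r+1) r * C n (j-3) + C (r+2) (r+1) * C n (j-2)) := by
  have h2 : (n:ℤ) + 2 = (n+1) + 1 := by ring
  rw [h2, C_pascal (n+1) (j-1) (by linarith), C_pascal (n+1) j (by linarith),
      show j-1-1 = j-2 from by ring,
      C_pascal n (j-2) hn, C_pascal n (j-1) hn, C_pascal n j hn]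
  have e1 : C r (r-1) = r := C_pred (by linarith)
  have e2 : C (r+1) r = r + 1 := by
    have := C_pred (show (0:ℤ) ≤ r+1 by linarith); rwa [show r+1-1 = r by ring] at this
  have e3 : C (r-1) (r-2) = r - 1 := by
    have := C_pred (show (0:ℤ) ≤ r-1 by linarith); rwa [show r-1-1 = r-2 by ring] at this
  have e4 : C (r+2) (r+1) = r + 2 := by
    have := C_pred (show (0:ℤ) ≤ r+2 by linarith); rwa [show r+2-1 = r+1 by ring] at this
  have e5 : C (r-1) (r-1) = 1 := C_self (by linarith)
  have e6 : C r r = 1 := C_self (by linarith)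
  have e7 : C (r+1) (r+1) = 1 := C_self (by linarith)
  rw [e1, e2, e3, e4, e5, e6, e7]
  ring

lemma key0 (n j : ℤ) (hn : 0 ≤ n) (hj : n - j = j - 2) :
    C (n+2) j = 2 * C (n+1) j - (C (n+1) (j-2) + C (n+1) (j-1)) + C n (j-1)
      + (C n (j-3) + 2 * C n (j-2)) := by
  have h2 : (n:ℤ) + 2 = (n+1) + 1 := by ring
  rw [h2, C_pascal (n+1) j (by linarith),
      C_pascal n (j-1) hn, C_pascal n j hn, C_pascal n (j-2) hn]
  have : C n j = C n (j-2) := by rw [C_symm n j hn, hj]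
  rw [this]
  rw [show j-1-1 = j-2 from by ring]; rw [show j-2-1 = j-3 from by ring]
  ring

theorem stmt_10 (k : ℤ) (hk : 1 ≤ k) :
    A (k + 1) 1 0 = 2 * A k 0 0 - A k 0 1 + A k 1 0 + A k 1 1 ∧
    ∀ r : ℤ, 1 ≤ r →
      A (k + 1) 1 r = A k 0 r - A k 0 (r + 1) + A k 1 (r - 1) + 2 * A k 1 r + A k 1 (r + 1) := by
  constructor
  · simp only [A]
    have h0 := key0 (2*k-2) k (by linarith) (by ring)
    rw [show (2:ℤ)*(k+1)-1-1 = 2*k-2+2 from by ring,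
        show (2:ℤ)*k-0-1 = 2*k-2+1 from by ring,
        show (2:ℤ)*k-1-1 = 2*k-2 from by ring,
        show (1:ℤ)+0-1 = 0 from by ring,
        show (0:ℤ)+0-1 = -1 from by ring,
        show (0:ℤ)+1-1 = 0 from by ring,
        show (1:ℤ)+1-1 = 1 from by ring,
        show (0:ℤ)-1 = -1 from by ring,
        show (1:ℤ)-1 = 0 from by ring,
        show (0:ℤ)+0 = 0 from by ring,
        show (1:ℤ)+0 = 1 from by ring,
        show (0:ℤ)+1 = 1 from by ring,
        show (1:ℤ)+1 = 2 from by ring,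
        show k+1-1-(0:ℤ)-1 = k-1 from by ring,
        show k+1-1-(0:ℤ) = k from by ring,
        show k-(0:ℤ)-0-1 = k-1 from by ring,
        show k-(0:ℤ)-0 = k from by ring,
        show k-(0:ℤ)-1-1 = k-2 from by ring,
        show k-(0:ℤ)-1 = k-1 from by ring,
        show k-(1:ℤ)-0-1 = k-2 from by ring,
        show k-(1:ℤ)-0 = k-1 from by ring,
        show k-(1:ℤ)-1-1 = k-3 from by ring,
        show k-(1:ℤ)-1 = k-2 from by ring]
    rw [C_neg (show (-1:ℤ) < 0 from by norm_num),
        show C 1 0 = 1 from by decide,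
        show C 0 0 = 1 from by decide,
        show C 1 1 = 1 from by decide,
        show C 2 1 = 2 from by decide,
        show C (-1) (-1) = 0 from by decide]
    linear_combination h0
  · intro r hr
    simp only [A]
    have h1 := keyr (2*k-2) r (k-r) (by linarith) hr
    rw [show (2:ℤ)*(k+1)-1-1 = 2*k-2+2 from by ring,
        show (2:ℤ)*k-0-1 = 2*k-2+1 from by ring,
        show (2:ℤ)*k-1-1 = 2*k-2 from by ring,
        show (1:ℤ)+r-1 = r from by ring,
        show (0:ℤ)+r-1 = r-1 from by ring,
        show (0:ℤ)+r = r from by ring,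
        show (0:ℤ)+(r+1)-1 = r from by ring,
        show (0:ℤ)+(r+1) = r+1 from by ring,
        show (1:ℤ)+(r-1)-1 = r-1 from by ring,
        show (1:ℤ)+(r-1) = r from by ring,
        show (1:ℤ)+r = r+1 from by ring,
        show (1:ℤ)+(r+1)-1 = r+1 from by ring,
        show (1:ℤ)+(r+1) = r+2 from by ring,
        show k+1-1-r-1 = (k-r)-1 from by ring,
        show k+1-1-r = k-r from by ring,
        show k-0-r-1 = (k-r)-1 from by ring,
        show k-0-r = k-r from by ring,
        show k-0-(r+1)-1 = (k-r)-2 from by ring,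
        show k-0-(r+1) = (k-r)-1 from by ring,
        show k-1-(r-1)-1 = (k-r)-1 from by ring,
        show k-1-(r-1) = k-r from by ring,
        show k-1-r-1 = (k-r)-2 from by ring,
        show k-1-r = (k-r)-1 from by ring,
        show k-1-(r+1)-1 = (k-r)-3 from by ring,
        show k-1-(r+1) = (k-r)-2 from by ring,
        show r-1-1 = r-2 from by ring,
        show r+1-1 = r from by ring]
    linear_combination h1
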